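/- arXiv:2303.00804 — 6 statements merged into one kernel-verified Lean document; each statement's English description precedes it below -/
import Mathlib

section
/- Let K be a field of characteristic 0 and g ≥ 2 even. If f ∈ K[x] is a squarefree polynomial of degree 2g+1 satisfying f(−x) = −f(x) and x^{2g+2} f(1/x) = −f(x), then f(x) = c·x(x⁴−1)·h(x) where c ∈ K and h is a self-reciprocal even polynomial of degree 2g−4, i.e. h(x) = x^{2g−4} + 1 + Σ_{j=1}^{g/2−1} a_j (x^{2g−4−2j} + x^{2j}) up to scaling. -/
open scoped Polynomial
open Polynomial Finset

/-!
Oddness kills the even coefficients of `f`, and the second symmetry reads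
`X * reflect (2g+1) f = -f`, so `2 f = ∑ fₖ (Xᵏ - X^(2g+2-k))` over odd `k`. As `g` is even,
`k ≡ 2g+2-k [MOD 4]` for odd `k`, so `X (X⁴ - 1)` divides every term. The cofactor `q` is even
and self-reciprocal of degree `2g-4`; pairing `q_{2j}` with `q_{2g-4-2j}` (and halving the middle
coefficient) gives the stated shape, normalised by `q₀ = lc q ≠ 0`.
-/

theorem Finset.sum_range_two_mul_add_one_eq_of_odd_eq_zero {M : Type*} [AddCommMonoid M]
    {F : ℕ → M} (hF : ∀ j, F (2 * j + 1) = 0) (m : ℕ) :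
    ∑ i ∈ range (2 * m + 1), F i = ∑ j ∈ range (m + 1), F (2 * j) := by
  induction m with
  | zero => simp
  | succ m ih =>
    rw [show 2 * (m + 1) + 1 = 2 * m + 1 + 1 + 1 from rfl, sum_range_succ, sum_range_succ, ih, hF,
      add_zero, sum_range_succ (n := m + 1)]
    rfl

namespace Polynomial

section CommRing

variable {R : Type*} [CommRing R]

theorem coeff_comp_neg_X (p : R[X]) (n : ℕ) :
    (p.comp (-X)).coeff n = (-1) ^ n * p.coeff n := by
  rw [← neg_one_mul (X : R[X]), ← C_1, ← C_neg, comp_C_mul_X_coeff, mul_comm]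

theorem reflect_eq_sum {p : R[X]} {N : ℕ} (hp : p.natDegree ≤ N) :
    reflect N p = ∑ k ∈ range (N + 1), C (p.coeff k) * X ^ (N - k) := by
  have reflect_sum (s : Finset ℕ) (F : ℕ → R[X]) :
      reflect N (∑ k ∈ s, F k) = ∑ k ∈ s, reflect N (F k) :=
    map_sum (AddMonoidHom.mk' (reflect N) fun p q => reflect_add p q N) F s
  conv_lhs => rw [p.as_sum_range_C_mul_X_pow' (Nat.lt_succ_of_le hp), reflect_sum]
  refine sum_congr rfl fun k hk => ?_
  rw [reflect_C_mul_X_pow, revAt_le (Nat.lt_succ_iff.1 (mem_range.1 hk))]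

theorem X_mul_X_pow_sub_one_dvd_X_pow_sub_X_pow {d k m : ℕ} (hk : k ≠ 0) (hm : m ≠ 0)
    (hkm : k ≡ m [MOD d]) : (X : R[X]) * (X ^ d - 1) ∣ X ^ k - X ^ m := by
  wlog hle : k ≤ m generalizing k m
  · rw [← neg_sub (X ^ m)]
    exact (this hm hk hkm.symm (by omega)).neg_right
  obtain ⟨r, hr⟩ := (Nat.modEq_iff_dvd' hle).1 hkm
  obtain ⟨k, rfl⟩ := Nat.exists_eq_add_one_of_ne_zero hk
  obtain rfl : m = k + 1 + d * r := by omega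
  have : (X : R[X]) ^ (k + 1) - X ^ (k + 1 + d * r) = -(X ^ k * X * ((X ^ d) ^ r - 1)) := by ring
  rw [this, dvd_neg]
  exact mul_dvd_mul (dvd_mul_left _ _) (sub_one_dvd_pow_sub_one _ _)

theorem X_mul_X_pow_four_sub_one_comp_neg_X :
    (X * (X ^ 4 - 1) : R[X]).comp (-X) = -(X * (X ^ 4 - 1)) := by
  simp only [mul_comp, sub_comp, pow_comp, X_comp, one_comp]
  ring

theorem X_mul_reflect_X_mul_X_pow_four_sub_one :
    X * reflect 5 (X * (X ^ 4 - 1) : R[X]) = -(X * (X ^ 4 - 1)) := by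
  rw [show (X * (X ^ 4 - 1) : R[X]) = X ^ 5 - X ^ 1 by ring, reflect_sub, reflect_monomial,
    reflect_monomial, revAt_le (by norm_num), revAt_le (by norm_num)]
  ring

theorem natDegree_X_mul_X_pow_four_sub_one [Nontrivial R] :
    (X * (X ^ 4 - 1) : R[X]).natDegree = 5 := by
  compute_degree!

end CommRing

section Field

variable {K : Type*} [Field K]

theorem eval_X_mul_reflect {p : K[X]} {N : ℕ} (hp : p.natDegree ≤ N) {t : K} (ht : t ≠ 0) :
    (X * reflect N p).eval t = t ^ (N + 1) * p.eval t⁻¹ := by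
  have := invertibleOfNonzero (inv_ne_zero ht)
  have h := eval₂_reflect_mul_pow (RingHom.id K) t⁻¹ N p hp
  rw [invOf_eq_inv, inv_inv, eval₂_id, eval₂_id] at h
  rw [eval_mul, eval_X, ← h, inv_pow, pow_succ]
  field_simp

section Domain

variable {d q : K[X]}

theorem comp_neg_X_eq_self_of_mul (hd : d ≠ 0) (hd' : d.comp (-X) = -d)
    (h : (d * q).comp (-X) = -(d * q)) : q.comp (-X) = q :=
  mul_left_cancel₀ hd (by rw [mul_comp, hd'] at h; linear_combination -h)

theorem reflect_eq_self_of_mul {m n : ℕ} (hd : d ≠ 0) (hdm : d.natDegree ≤ m)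
    (hqn : q.natDegree ≤ n) (hd' : X * reflect m d = -d)
    (h : X * reflect (m + n) (d * q) = -(d * q)) : reflect n q = q :=
  mul_left_cancel₀ hd <| by
    rw [reflect_mul d q hdm hqn, ← mul_assoc, hd'] at h
    linear_combination -h

end Domain

variable [NeZero (2 : K)]

theorem coeff_two_mul_eq_zero_of_comp_neg_X_eq_neg {p : K[X]} (h : p.comp (-X) = -p) (k : ℕ) :
    p.coeff (2 * k) = 0 := by
  have hk := congr_arg (coeff · (2 * k)) h
  rw [coeff_comp_neg_X, coeff_neg, (even_two_mul k).neg_one_pow, one_mul] at hk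
  have h2 : (2 : K) * p.coeff (2 * k) = 0 := by linear_combination hk
  exact (mul_eq_zero.1 h2).resolve_left two_ne_zero

theorem coeff_two_mul_add_one_eq_zero_of_comp_neg_X_eq_self {p : K[X]} (h : p.comp (-X) = p)
    (k : ℕ) : p.coeff (2 * k + 1) = 0 := by
  have hk := congr_arg (coeff · (2 * k + 1)) h
  rw [coeff_comp_neg_X, (odd_two_mul_add_one k).neg_one_pow, neg_one_mul] at hk
  have h2 : (2 : K) * p.coeff (2 * k + 1) = 0 := by linear_combination -hk
  exact (mul_eq_zero.1 h2).resolve_left two_ne_zero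

theorem X_mul_X_pow_four_sub_one_dvd {f : K[X]} {N : ℕ} (hN : N % 4 = 1) (hdeg : f.natDegree ≤ N)
    (hodd : f.comp (-X) = -f) (hrefl : X * reflect N f = -f) : X * (X ^ 4 - 1) ∣ f := by
  have hpair : C 2 * f = ∑ k ∈ range (N + 1), C (f.coeff k) * (X ^ k - X ^ (N + 1 - k)) := by
    calc C 2 * f = f - X * reflect N f := by rw [hrefl, C_ofNat]; ring
      _ = _ := by
        rw [reflect_eq_sum hdeg, mul_sum]
        nth_rw 1 [f.as_sum_range_C_mul_X_pow' (Nat.lt_succ_of_le hdeg)]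
        rw [← sum_sub_distrib]
        refine sum_congr rfl fun k hk => ?_
        rw [Nat.succ_sub (Nat.lt_succ_iff.1 (mem_range.1 hk)), pow_succ]
        ring
  refine (isUnit_C.2 (Ne.isUnit two_ne_zero)).dvd_mul_left.1 (hpair ▸ dvd_sum fun k hk => ?_)
  have hk := Nat.lt_succ_iff.1 (mem_range.1 hk)
  rcases Nat.even_or_odd' k with ⟨j, rfl | rfl⟩
  · rw [coeff_two_mul_eq_zero_of_comp_neg_X_eq_neg hodd, C_0, zero_mul]
    exact dvd_zero _
  · refine dvd_mul_of_dvd_right (X_mul_X_pow_sub_one_dvd_X_pow_sub_X_pow (by omega) (by omega) ?_) _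
    simp only [Nat.ModEq]
    omega

theorem eq_sum_range_of_reflect_eq_self {p : K[X]} {n : ℕ} (hdeg : p.natDegree ≤ 2 * n)
    (hsym : reflect (2 * n) p = p) :
    p = ∑ j ∈ range (n + 1),
      C (if j = n then p.coeff n / 2 else p.coeff j) * (X ^ (2 * n - j) + X ^ j) := by
  ext k
  simp only [finsetSum_coeff, coeff_C_mul, coeff_add, coeff_X_pow, mul_add, sum_add_distrib,
    mul_ite, mul_one, mul_zero]
  rcases le_or_gt k (2 * n) with hk | hk
  · have hpal : p.coeff (2 * n - k) = p.coeff k := by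
      conv_rhs => rw [← hsym, coeff_reflect, revAt_le hk]
    rw [sum_congr rfl fun j hj => if_congr (Q := 2 * n - k = j)
      (by have := mem_range.1 hj; omega) rfl rfl, sum_ite_eq, sum_ite_eq]
    simp only [mem_range]
    rcases lt_trichotomy k n with hkn | rfl | hkn
    · rw [if_neg (by omega), if_pos (by omega), if_neg hkn.ne, zero_add]
    · rw [if_pos (by omega), if_pos (by omega), if_pos (by omega), if_pos rfl, add_halves]
    · rw [if_pos (by omega), if_neg (by omega), if_neg (by omega), hpal, add_zero]
  · rw [coeff_eq_zero_of_natDegree_lt (hdeg.trans_lt hk), sum_eq_zero, sum_eq_zero, add_zero] <;>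
      intro j hj <;> rw [if_neg (by have := mem_range.1 hj; omega)]

theorem exists_eq_C_mul_of_comp_neg_X_eq_self_of_reflect_eq_self {q : K[X]} {h : ℕ} (hq : q ≠ 0)
    (hdeg : q.natDegree = 4 * h) (heven : q.comp (-X) = q) (hsym : reflect (4 * h) q = q) :
    ∃ (c : K) (a : ℕ → K), q = C c * (X ^ (4 * h) + 1 +
      ∑ j ∈ Icc 1 h, C (a j) * (X ^ (4 * h - 2 * j) + X ^ (2 * j))) := by
  have hdecomp := eq_sum_range_of_reflect_eq_self (p := q) (n := 2 * h) (by omega)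
    (by rwa [← mul_assoc])
  rw [sum_range_two_mul_add_one_eq_of_odd_eq_zero, Nat.range_succ_eq_Icc_zero,
    ← insert_Icc_add_one_left_eq_Icc h.zero_le, sum_insert (by simp)] at hdecomp
  · rw [mul_zero, Nat.sub_zero, pow_zero, zero_add, show 2 * (2 * h) = 4 * h by ring] at hdecomp
    set c : K := if 0 = 2 * h then q.coeff (2 * h) / 2 else q.coeff 0 with hc
    have hq0 : q.coeff 0 ≠ 0 := by
      rw [← hsym, coeff_reflect, revAt_zero, ← hdeg]
      exact leadingCoeff_ne_zero.2 hq
    have hc0 : c ≠ 0 := by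
      rw [hc]
      split_ifs with h0
      · rw [← h0]
        exact div_ne_zero hq0 two_ne_zero
      · exact hq0
    refine ⟨c, fun j => (if 2 * j = 2 * h then q.coeff (2 * h) / 2 else q.coeff (2 * j)) / c,
      hdecomp.trans ?_⟩
    rw [mul_add _ (_ + _), mul_sum]
    congr 1
    refine sum_congr rfl fun j _ => ?_
    rw [← mul_assoc, ← C_mul, mul_div_cancel₀ _ hc0]
  · intro j
    rw [if_neg (by omega), coeff_two_mul_add_one_eq_zero_of_comp_neg_X_eq_self heven, C_0, zero_mul]

end Field

end Polynomial

theorem squarefree_odd_selfreciprocal_factorization_general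
    (K : Type*) [Field K] [CharZero K] (g : ℕ) (hge : Even g)
    (f : K[X]) (hdeg : f.natDegree = 2 * g + 1)
    (hodd : ∀ t : K, f.eval (-t) = -f.eval t)
    (hrec : ∀ t : K, t ≠ 0 → t ^ (2 * g + 2) * f.eval t⁻¹ = -f.eval t) :
    ∃ (c : K) (a : ℕ → K),
      f = C c * (X * (X ^ 4 - 1) *
        (X ^ (2 * g - 4) + 1 +
          ∑ j ∈ Finset.Icc 1 (g / 2 - 1),
            C (a j) * (X ^ (2 * g - 4 - 2 * j) + X ^ (2 * j)))) := by
  have hneg : f.comp (-X) = -f := Polynomial.funext fun t => by simp [eval_comp, hodd]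
  have hrefl : X * reflect (2 * g + 1) f = -f := by
    refine eq_of_infinite_eval_eq _ _
      ((Set.finite_singleton 0).infinite_compl.mono fun t ht => ?_)
    rw [Set.mem_ofPred_eq, eval_X_mul_reflect hdeg.le ht, eval_neg, ← hrec t ht]
  have hf0 : f ≠ 0 := ne_zero_of_natDegree_gt (n := 0) (by omega)
  have hd0 : (X * (X ^ 4 - 1) : K[X]) ≠ 0 :=
    ne_zero_of_natDegree_gt (n := 0) (by rw [natDegree_X_mul_X_pow_four_sub_one]; norm_num)
  obtain ⟨r, rfl⟩ := hge
  obtain ⟨q, rfl⟩ := X_mul_X_pow_four_sub_one_dvd (by omega) hdeg.le hneg hrefl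
  have hq0 : q ≠ 0 := right_ne_zero_of_mul hf0
  have hqdeg : q.natDegree + 5 = 2 * (r + r) + 1 := by
    rw [← hdeg, natDegree_mul hd0 hq0, natDegree_X_mul_X_pow_four_sub_one, add_comm]
  obtain ⟨h, rfl⟩ : ∃ h, r = h + 1 := Nat.exists_eq_add_one_of_ne_zero (by omega)
  have hq4 : q.natDegree = 4 * h := by omega
  obtain ⟨c, a, hq⟩ := exists_eq_C_mul_of_comp_neg_X_eq_self_of_reflect_eq_self hq0 hq4
    (comp_neg_X_eq_self_of_mul hd0 X_mul_X_pow_four_sub_one_comp_neg_X hneg)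
    (reflect_eq_self_of_mul hd0 natDegree_X_mul_X_pow_four_sub_one.le hq4.le
      X_mul_reflect_X_mul_X_pow_four_sub_one
      (by rwa [show 5 + 4 * h = 2 * (h + 1 + (h + 1)) + 1 by ring]))
  refine ⟨c, a, ?_⟩
  rw [show 2 * (h + 1 + (h + 1)) - 4 = 4 * h by omega, show (h + 1 + (h + 1)) / 2 - 1 = h by omega,
    hq]
  ring

/-- Let `K` be a field of characteristic `0` and `g ≥ 2` even.  If `f ∈ K[x]` is a
squarefree polynomial of degree `2g+1` satisfying `f(−x) = −f(x)` and
`x^{2g+2} f(1/x) = −f(x)`, then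
`f(x) = c·x(x⁴−1)·(x^{2g−4} + 1 + Σ_{j=1}^{g/2−1} a_j (x^{2g−4−2j} + x^{2j}))`
for some `c ∈ K` and coefficients `a_j ∈ K`. -/
theorem squarefree_odd_selfreciprocal_factorization
    (K : Type*) [Field K] [CharZero K] (g : ℕ) (hg2 : 2 ≤ g) (hge : Even g)
    (f : K[X]) (hsf : Squarefree f) (hdeg : f.natDegree = 2 * g + 1)
    (hodd : ∀ t : K, f.eval (-t) = -f.eval t)
    (hrec : ∀ t : K, t ≠ 0 → t ^ (2 * g + 2) * f.eval t⁻¹ = -f.eval t) :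
    ∃ (c : K) (a : ℕ → K),
      f = C c * (X * (X ^ 4 - 1) *
        (X ^ (2 * g - 4) + 1 +
          ∑ j ∈ Finset.Icc 1 (g / 2 - 1),
            C (a j) * (X ^ (2 * g - 4 - 2 * j) + X ^ (2 * j)))) :=
  squarefree_odd_selfreciprocal_factorization_general K g hge f hdeg hodd hrec
end

section
/- Let R(α), R(β) be the explicit 8×8 integer matrices: R(α) is block-diagonal with four 2×2 blocks [[0,−1],[1,0]]; R(β) is the 8×8 matrix with rows (1,0,−1,−1,0,0,0,0), (0,−1,−1,1,0,0,0,0), (1,1,0,−1,0,0,0,0), (1,−1,−1,0,0,0,0,0), (0,0,0,−1,0,0,0,1), (0,0,−1,0,0,0,1,0), (1,1,0,−1,0,−1,0,0), (1,−1,−1,0,−1,0,0,0). Then R(α)² = R(β)² = −I₈ and R(β)R(α) = −R(α)R(β); consequently the assignment i ↦ R(α), j ↦ R(β) defines a ring homomorphism from the Lipschitz order ℤ⟨i,j⟩ ⊂ (−1,−1|ℚ) into M₈(ℤ). -/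
open scoped Quaternion

/-- The matrix `R(α)` of the automorphism `α` on `H₁(C,ℤ) ≅ ℤ⁸`: block-diagonal
with four `2×2` blocks `[[0,−1],[1,0]]`. -/
def Ralpha : Matrix (Fin 8) (Fin 8) ℤ :=
  !![0,-1,0,0,0,0,0,0;
     1,0,0,0,0,0,0,0;
     0,0,0,-1,0,0,0,0;
     0,0,1,0,0,0,0,0;
     0,0,0,0,0,-1,0,0;
     0,0,0,0,1,0,0,0;
     0,0,0,0,0,0,0,-1;
     0,0,0,0,0,0,1,0]

/-- The matrix `R(β)` of the automorphism `β` on `H₁(C,ℤ) ≅ ℤ⁸`. -/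
def Rbeta : Matrix (Fin 8) (Fin 8) ℤ :=
  !![1,0,-1,-1,0,0,0,0;
     0,-1,-1,1,0,0,0,0;
     1,1,0,-1,0,0,0,0;
     1,-1,-1,0,0,0,0,0;
     0,0,0,-1,0,0,0,1;
     0,0,-1,0,0,0,1,0;
     1,1,0,-1,0,-1,0,0;
     1,-1,-1,0,-1,0,0,0]

namespace QuaternionAlgebra

variable {R A : Type*} [CommRing R] [Ring A] [Algebra R A]

def Basis.ofAnticomm (i j : A) (hi : i * i = -1) (hj : j * j = -1)
    (hji : j * i = -(i * j)) : Basis A (-1 : R) 0 (-1) where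
  i := i
  j := j
  k := i * j
  i_mul_i := by rw [hi]; simp
  j_mul_j := by rw [hj]; simp
  i_mul_j := rfl
  j_mul_i := by rw [hji]; simp [sub_eq_add_neg]

variable (i j : A) (hi : i * i = -1) (hj : j * j = -1) (hji : j * i = -(i * j))

theorem liftHom_ofAnticomm_imI :
    (Basis.ofAnticomm (R := R) i j hi hj hji).liftHom ⟨0, 1, 0, 0⟩ = i := by
  simp [Basis.lift, Basis.ofAnticomm]

theorem liftHom_ofAnticomm_imJ :
    (Basis.ofAnticomm (R := R) i j hi hj hji).liftHom ⟨0, 0, 1, 0⟩ = j := by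
  simp [Basis.lift, Basis.ofAnticomm]

end QuaternionAlgebra

theorem Ralpha_mul_self : Ralpha * Ralpha = -1 := by decide

theorem Rbeta_mul_self : Rbeta * Rbeta = -1 := by decide

theorem Rbeta_mul_Ralpha : Rbeta * Ralpha = -(Ralpha * Rbeta) := by decide

/-- `R(α)² = R(β)² = −I₈` and `R(β)R(α) = −R(α)R(β)`; consequently `i ↦ R(α)`,
`j ↦ R(β)` defines a ring homomorphism from the Lipschitz order
`ℤ + ℤi + ℤj + ℤk ⊂ (−1,−1|ℚ)` (the quaternions over `ℤ` with `i² = j² = −1`)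
into `M₈(ℤ)`. -/
theorem lipschitz_order_maps_to_M8Z :
    Ralpha * Ralpha = -1 ∧ Rbeta * Rbeta = -1 ∧
    Rbeta * Ralpha = -(Ralpha * Rbeta) ∧
    ∃ φ : ℍ[ℤ,-1,-1] →+* Matrix (Fin 8) (Fin 8) ℤ,
      φ ⟨0, 1, 0, 0⟩ = Ralpha ∧ φ ⟨0, 0, 1, 0⟩ = Rbeta :=
  ⟨Ralpha_mul_self, Rbeta_mul_self, Rbeta_mul_Ralpha,
    (QuaternionAlgebra.Basis.ofAnticomm Ralpha Rbeta Ralpha_mul_self Rbeta_mul_self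
      Rbeta_mul_Ralpha).liftHom.toRingHom,
    QuaternionAlgebra.liftHom_ofAnticomm_imI _ _ _ _ _,
    QuaternionAlgebra.liftHom_ofAnticomm_imJ _ _ _ _ _⟩
end

section
/- Let R(i), R(j) ∈ M₈(ℤ) be the matrices of the Q8-action on homology as above, and R(k) = R(i)R(j). The element ω = (−1 + i + j + k)/2 of the Hurwitz order does not preserve the lattice ℤ⁸: the matrix (−I + R(i) + R(j) + R(k))/2 does not have integer entries. Equivalently, the matrix −I + R(i) + R(j) + R(k) is nonzero modulo 2. -/
/-- The matrix `R(i)` of the `Q₈`-action on `H₁(C,ℤ) ≅ ℤ⁸`: block-diagonal with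
four `2×2` blocks `[[0,−1],[1,0]]`. -/
def Ri : Matrix (Fin 8) (Fin 8) ℤ :=
  !![0,-1,0,0,0,0,0,0;
     1,0,0,0,0,0,0,0;
     0,0,0,-1,0,0,0,0;
     0,0,1,0,0,0,0,0;
     0,0,0,0,0,-1,0,0;
     0,0,0,0,1,0,0,0;
     0,0,0,0,0,0,0,-1;
     0,0,0,0,0,0,1,0]

/-- The matrix `R(j)` of the `Q₈`-action on `H₁(C,ℤ) ≅ ℤ⁸`. -/
def Rj : Matrix (Fin 8) (Fin 8) ℤ :=
  !![1,0,-1,-1,0,0,0,0;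
     0,-1,-1,1,0,0,0,0;
     1,1,0,-1,0,0,0,0;
     1,-1,-1,0,0,0,0,0;
     0,0,0,-1,0,0,0,1;
     0,0,-1,0,0,0,1,0;
     1,1,0,-1,0,-1,0,0;
     1,-1,-1,0,-1,0,0,0]

/-- The element `ω = (−1 + i + j + k)/2` of the Hurwitz order does not preserve
the lattice `ℤ⁸`: the matrix `(−I + R(i) + R(j) + R(k))/2` (with `R(k) = R(i)R(j)`)
does not have integer entries; equivalently `−I + R(i) + R(j) + R(k)` is nonzero
modulo `2`. -/
theorem hurwitz_omega_not_integral :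
    (¬ ∃ M : Matrix (Fin 8) (Fin 8) ℤ, -1 + Ri + Rj + Ri * Rj = 2 • M) ∧
    (-1 + Ri + Rj + Ri * Rj).map (Int.cast : ℤ → ZMod 2) ≠ 0 := by
  have key : (-1 + Ri + Rj + Ri * Rj) 4 2 = 1 := by
    simp [Ri, Rj, Matrix.mul_apply, Fin.sum_univ_eight, Matrix.add_apply,
      Matrix.neg_apply, Matrix.one_apply]
  constructor
  · rintro ⟨M, h⟩
    have h42 : (1 : ℤ) = 2 * M 4 2 := by
      rw [← key, h]; simp [Matrix.smul_apply]
    omega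
  · intro h
    have := congrArg (fun N => N 4 2) h
    simp [Matrix.map_apply, key] at this
end

section
/- Let Λ₂ = ℤ₂⁸ with the action of the 2-adic Lipschitz order 𝒪₂ = ℤ₂⟨i,j⟩ given by i ↦ R(i), j ↦ R(j) as above, and let J₂ = (1+i, 1+j, 1+k) be the Jacobson radical of 𝒪₂. Then dim_{𝔽₂}(J₂Λ₂/2Λ₂) = 5, hence dim_{𝔽₂}(Λ₂/J₂Λ₂) = 3, and therefore Λ₂ is not a free 𝒪₂-module. -/
/-!
Reduce modulo `2`. If `v₁, …, vₙ` were an `𝒪₂`-basis of `Λ₂`, the vectors `e vₗ` with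
`e ∈ {1, i, j, k}` would reduce to an `𝔽₂`-basis of `Λ₂/2Λ₂`, so `4n = 8`; and since every `e`
is `≡ 1` modulo `J₂`, the reductions of the `vₗ` alone would span `Λ₂/J₂Λ₂`, so `n ≥ 3`.
No `ℤ₂`-linearity of the action is needed for the reduction: every ring map from `ℤ₂` to an
`𝔽₂`-algebra factors through `ℤ₂/2ℤ₂ = 𝔽₂`. The dimension `5` of `J₂Λ₂/2Λ₂` is a finite
computation: five of the generating columns are independent and span the others.
-/

open scoped Quaternion

/-- `R(k) = R(i)·R(j)`. -/
def Rk : Matrix (Fin 8) (Fin 8) ℤ := Ri * Rj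

/-- The span over `𝔽₂` of the columns of `I+R(i)`, `I+R(j)`, `I+R(k)` reduced
mod 2; this is `J₂Λ₂/2Λ₂` where `J₂ = (1+i,1+j,1+k)` is the Jacobson radical of
the 2-adic Lipschitz order `𝒪₂`. -/
noncomputable def JLambda : Submodule (ZMod 2) (Fin 8 → ZMod 2) :=
  Submodule.span (ZMod 2)
    ((Set.range fun k r => ((1 + Ri).map (Int.cast : ℤ → ZMod 2)) r k) ∪
     (Set.range fun k r => ((1 + Rj).map (Int.cast : ℤ → ZMod 2)) r k) ∪
     (Set.range fun k r => ((1 + Rk).map (Int.cast : ℤ → ZMod 2)) r k))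

open Matrix

namespace PadicInt

variable {p : ℕ} [Fact p.Prime]

theorem exists_eq_val_toZMod_add_mul (s : ℤ_[p]) : ∃ t, s = ((toZMod s).val : ℤ_[p]) + p * t := by
  have hs := toZMod_spec s
  rw [maximalIdeal_eq_span_p, Ideal.mem_span_singleton', ZMod.cast_eq_val] at hs
  obtain ⟨t, ht⟩ := hs
  exact ⟨t, by rw [mul_comm, ht]; ring⟩

theorem ringHom_eq_algebraMap_comp_toZMod {S : Type*} [Ring S] [Algebra (ZMod p) S]
    (f : ℤ_[p] →+* S) : f = (algebraMap (ZMod p) S).comp toZMod := by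
  ext s
  obtain ⟨t, ht⟩ := exists_eq_val_toZMod_add_mul s
  have hp : (p : S) = 0 := by
    rw [← map_natCast (algebraMap (ZMod p) S), ZMod.natCast_self, map_zero]
  calc f s = f ((toZMod s).val + p * t) := congrArg f ht
    _ = ((toZMod s).val : S) := by
      rw [map_add, map_mul, map_natCast, map_natCast, hp, zero_mul, add_zero]
    _ = algebraMap (ZMod p) S (toZMod s) := by
      rw [← map_natCast (algebraMap (ZMod p) S), ZMod.natCast_zmod_val]

theorem exists_eq_nsmul_of_toZMod_comp_eq_zero {ι : Type*} {w : ι → ℤ_[p]}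
    (hw : toZMod ∘ w = 0) : ∃ y, w = p • y := by
  have hdvd (r : ι) : ∃ t, t * (p : ℤ_[p]) = w r := by
    rw [← Ideal.mem_span_singleton', ← maximalIdeal_eq_span_p, ← ker_toZMod]
    exact congrFun hw r
  choose y hy using hdvd
  exact ⟨y, funext fun r => by rw [← hy, Pi.smul_apply, nsmul_eq_mul, mul_comm]⟩

theorem toZMod_natCast_val (x : ZMod p) : toZMod ((x.val : ℕ) : ℤ_[p]) = x := by
  rw [map_natCast, ZMod.natCast_zmod_val]

end PadicInt

namespace QuaternionAlgebra

variable {p : ℕ} [Fact p.Prime] {c₁ c₂ c₃ : ℤ_[p]}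

theorem ringHom_apply_eq_sum_toZMod_smul {S : Type*} [Ring S] [Algebra (ZMod p) S]
    (f : ℍ[ℤ_[p],c₁,c₂,c₃] →+* S) (q : ℍ[ℤ_[p],c₁,c₂,c₃]) :
    f q = ∑ m, PadicInt.toZMod ((basisOneIJK c₁ c₂ c₃).repr q m) • f (basisOneIJK c₁ c₂ c₃ m) := by
  conv_lhs => rw [← (basisOneIJK c₁ c₂ c₃).sum_repr q]
  rw [map_sum]
  refine Finset.sum_congr rfl fun m _ => ?_
  rw [Algebra.smul_def, map_mul, ← RingHom.comp_apply,
    PadicInt.ringHom_eq_algebraMap_comp_toZMod (f.comp (algebraMap ℤ_[p] _)), RingHom.comp_apply,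
    ← Algebra.smul_def]

end QuaternionAlgebra

noncomputable section Reduction

open QuaternionAlgebra PadicInt

variable {p : ℕ} [Fact p.Prime] {c₁ c₂ c₃ : ℤ_[p]} {ι : Type*} [Fintype ι] [DecidableEq ι]
  (φ : ℍ[ℤ_[p],c₁,c₂,c₃] →+* Matrix ι ι ℤ_[p]) {n : ℕ} (v : Fin n → ι → ℤ_[p])

def quatCombination : (Fin n → ℍ[ℤ_[p],c₁,c₂,c₃]) →+ (ι → ℤ_[p]) :=
  AddMonoidHom.mk' (fun q => ∑ l, φ (q l) *ᵥ v l) fun q q' => by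
    simp only [Pi.add_apply, map_add, add_mulVec, Finset.sum_add_distrib]

def reducedFamily (lm : Fin n × Fin 4) : ι → ZMod p :=
  toZMod.mapMatrix (φ (basisOneIJK c₁ c₂ c₃ lm.2)) *ᵥ (toZMod ∘ v lm.1)

theorem toZMod_comp_quatCombination (q : Fin n → ℍ[ℤ_[p],c₁,c₂,c₃]) :
    toZMod ∘ quatCombination φ v q =
      ∑ lm, toZMod ((basisOneIJK c₁ c₂ c₃).repr (q lm.1) lm.2) • reducedFamily φ v lm := by
  have hterm (l : Fin n) : toZMod ∘ (φ (q l) *ᵥ v l) =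
      ∑ m, toZMod ((basisOneIJK c₁ c₂ c₃).repr (q l) m) • reducedFamily φ v (l, m) := by
    funext r
    rw [Function.comp_apply, RingHom.map_mulVec, ← RingHom.mapMatrix_apply, ← RingHom.comp_apply,
      ringHom_apply_eq_sum_toZMod_smul, sum_mulVec]
    simp only [smul_mulVec, RingHom.comp_apply, RingHom.mapMatrix_apply, reducedFamily]
  funext r
  simp only [quatCombination, AddMonoidHom.mk'_apply, Function.comp_apply, Finset.sum_apply,
    map_sum, Fintype.sum_prod_type]
  exact Finset.sum_congr rfl fun l _ => by rw [← Finset.sum_apply, ← hterm l]; rfl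

variable {φ v}

theorem linearIndependent_reducedFamily
    (hv : ∀ w, ∃! q, w = quatCombination φ v q) :
    LinearIndependent (ZMod p) (reducedFamily φ v) := by
  rw [Fintype.linearIndependent_iff]
  intro c hc lm
  let q : Fin n → ℍ[ℤ_[p],c₁,c₂,c₃] := fun l =>
    (basisOneIJK c₁ c₂ c₃).equivFun.symm fun m => ((c (l, m)).val : ℤ_[p])
  have hq (l : Fin n) (m : Fin 4) : toZMod ((basisOneIJK c₁ c₂ c₃).repr (q l) m) = c (l, m) := by
    rw [← Module.Basis.equivFun_apply, LinearEquiv.apply_symm_apply, toZMod_natCast_val]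
  have hq0 : toZMod ∘ quatCombination φ v q = 0 := by
    rw [toZMod_comp_quatCombination]
    simp only [hq, hc]
  obtain ⟨y, hy⟩ := exists_eq_nsmul_of_toZMod_comp_eq_zero hq0
  obtain ⟨x, rfl⟩ := (hv y).exists
  have hqx : q = p • x := (hv _).unique rfl (by rw [hy, map_nsmul])
  rw [← hq, hqx, Pi.smul_apply, map_nsmul, Finsupp.smul_apply, map_nsmul, nsmul_eq_mul,
    ZMod.natCast_self, zero_mul]

theorem span_reducedFamily (hv : ∀ w, ∃ q, w = quatCombination φ v q) :
    Submodule.span (ZMod p) (Set.range (reducedFamily φ v)) = ⊤ := by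
  refine Submodule.eq_top_iff'.2 fun w => ?_
  obtain ⟨q, hq⟩ := hv fun r => ((w r).val : ℤ_[p])
  have hw : w = toZMod ∘ quatCombination φ v q := by
    rw [← hq]
    exact funext fun r => (toZMod_natCast_val (w r)).symm
  rw [hw, toZMod_comp_quatCombination]
  exact Submodule.sum_mem _ fun lm _ => Submodule.smul_mem _ _ (Submodule.subset_span ⟨lm, rfl⟩)

theorem finrank_quotient_le_of_forall_sub_mem (hv : ∀ w, ∃ q, w = quatCombination φ v q)
    (J : Submodule (ZMod p) (ι → ZMod p))
    (hJ : ∀ m x, toZMod.mapMatrix (φ (basisOneIJK c₁ c₂ c₃ m)) *ᵥ x - x ∈ J) :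
    Module.finrank (ZMod p) ((ι → ZMod p) ⧸ J) ≤ n := by
  have hspan : Submodule.span (ZMod p) (Set.range fun l => J.mkQ (toZMod ∘ v l)) = ⊤ := by
    rw [eq_top_iff, ← Submodule.range_mkQ J, LinearMap.range_eq_map, ← span_reducedFamily hv,
      Submodule.map_span, Submodule.span_le]
    rintro _ ⟨_, ⟨lm, rfl⟩, rfl⟩
    refine Submodule.subset_span ⟨lm.1, ?_⟩
    exact (Submodule.Quotient.eq J).2 (J.neg_mem_iff.1 (by rw [neg_sub]; exact hJ lm.2 _))
  rw [← finrank_top (ZMod p), ← hspan]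
  exact (finrank_range_le_card _).trans_eq (Fintype.card_fin n)

end Reduction

def J2basis : Fin 5 → Fin 8 → ZMod 2 :=
  ![((1 + Ri).map Int.cast).col 0, ((1 + Ri).map Int.cast).col 2, ((1 + Ri).map Int.cast).col 4,
    ((1 + Ri).map Int.cast).col 6, ((1 + Rj).map Int.cast).col 2]

theorem linearIndependent_J2basis : LinearIndependent (ZMod 2) J2basis := by
  rw [Fintype.linearIndependent_iff]
  decide

theorem JLambda_eq_span_J2basis : JLambda = Submodule.span (ZMod 2) (Set.range J2basis) := by
  have hcols : ∀ k, (∃ c : Fin 5 → ZMod 2, ∑ i, c i • J2basis i = ((1 + Ri).map Int.cast).col k) ∧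
      (∃ c : Fin 5 → ZMod 2, ∑ i, c i • J2basis i = ((1 + Rj).map Int.cast).col k) ∧
      (∃ c : Fin 5 → ZMod 2, ∑ i, c i • J2basis i = ((1 + Rk).map Int.cast).col k) := by
    decide
  simp only [← Submodule.mem_span_range_iff_exists_fun] at hcols
  refine le_antisymm (Submodule.span_le.2 ?_) (Submodule.span_le.2 ?_)
  · rintro _ ((⟨k, rfl⟩ | ⟨k, rfl⟩) | ⟨k, rfl⟩)
    exacts [(hcols k).1, (hcols k).2.1, (hcols k).2.2]
  · rintro _ ⟨i, rfl⟩
    apply Submodule.subset_span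
    fin_cases i
    exacts [Or.inl (Or.inl ⟨0, rfl⟩), Or.inl (Or.inl ⟨2, rfl⟩), Or.inl (Or.inl ⟨4, rfl⟩),
      Or.inl (Or.inl ⟨6, rfl⟩), Or.inl (Or.inr ⟨2, rfl⟩)]

theorem finrank_JLambda : Module.finrank (ZMod 2) JLambda = 5 := by
  rw [JLambda_eq_span_J2basis, finrank_span_eq_card linearIndependent_J2basis, Fintype.card_fin]

theorem finrank_quotient_JLambda : Module.finrank (ZMod 2) ((Fin 8 → ZMod 2) ⧸ JLambda) = 3 := by
  have h := Submodule.finrank_quotient_add_finrank JLambda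
  rw [finrank_JLambda, Module.finrank_fin_fun] at h
  omega

theorem mulVec_sub_self_mem_span_col_one_add {ι : Type*} [Fintype ι] [DecidableEq ι]
    (M : Matrix ι ι ℤ) (x : ι → ZMod 2) :
    M.map Int.cast *ᵥ x - x ∈ Submodule.span (ZMod 2) (Set.range ((1 + M).map Int.cast).col) := by
  have hneg : -x = x := funext fun r => ZMod.neg_eq_self_mod_two (x r)
  rw [← range_mulVecLin]
  refine ⟨x, ?_⟩
  rw [mulVecLin_apply, Matrix.map_add _ Int.cast_add, Matrix.map_one _ Int.cast_zero Int.cast_one,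
    add_mulVec, one_mulVec, sub_eq_add_neg, hneg, add_comm]

theorem toZMod_mapMatrix_map_intCast {p : ℕ} [Fact p.Prime] {ι : Type*} [Fintype ι]
    [DecidableEq ι] (M : Matrix ι ι ℤ) :
    PadicInt.toZMod.mapMatrix (M.map (Int.cast : ℤ → ℤ_[p])) = M.map Int.cast := by
  ext
  simp

open QuaternionAlgebra in
theorem toZMod_mapMatrix_basisOneIJK_mulVec_sub_self_mem_JLambda
    (φ : ℍ[ℤ_[2],-1,-1] →+* Matrix (Fin 8) (Fin 8) ℤ_[2])
    (hi : φ ⟨0, 1, 0, 0⟩ = Ri.map (Int.cast : ℤ → ℤ_[2]))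
    (hj : φ ⟨0, 0, 1, 0⟩ = Rj.map (Int.cast : ℤ → ℤ_[2])) (m : Fin 4) (x : Fin 8 → ZMod 2) :
    PadicInt.toZMod.mapMatrix (φ (basisOneIJK (-1) 0 (-1) m)) *ᵥ x - x ∈ JLambda := by
  have hcol (M : Matrix (Fin 8) (Fin 8) ℤ) (hM : M = Ri ∨ M = Rj ∨ M = Rk) :
      M.map Int.cast *ᵥ x - x ∈ JLambda := by
    refine Submodule.span_mono ?_ (mulVec_sub_self_mem_span_col_one_add M x)
    rcases hM with rfl | rfl | rfl
    exacts [fun _ h => Or.inl (Or.inl h), fun _ h => Or.inl (Or.inr h), fun _ h => Or.inr h]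
  match m with
  | 0 =>
    have h0 : basisOneIJK (-1 : ℤ_[2]) 0 (-1) 0 = 1 := by ext <;> simp [basisOneIJK]
    simp only [h0, map_one, one_mulVec, sub_self, zero_mem]
  | 1 =>
    have h1 : basisOneIJK (-1 : ℤ_[2]) 0 (-1) 1 = ⟨0, 1, 0, 0⟩ := by ext <;> simp [basisOneIJK]
    rw [h1, hi, toZMod_mapMatrix_map_intCast]
    exact hcol Ri (Or.inl rfl)
  | 2 =>
    have h2 : basisOneIJK (-1 : ℤ_[2]) 0 (-1) 2 = ⟨0, 0, 1, 0⟩ := by ext <;> simp [basisOneIJK]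
    rw [h2, hj, toZMod_mapMatrix_map_intCast]
    exact hcol Rj (Or.inr (Or.inl rfl))
  | 3 =>
    have h3 : basisOneIJK (-1 : ℤ_[2]) 0 (-1) 3 = ⟨0, 1, 0, 0⟩ * ⟨0, 0, 1, 0⟩ := by
      ext <;> simp [basisOneIJK]
    rw [h3, map_mul, hi, hj, map_mul, toZMod_mapMatrix_map_intCast, toZMod_mapMatrix_map_intCast]
    convert hcol Rk (Or.inr (Or.inr rfl)) using 3
    exact (Matrix.map_mul (f := Int.castRingHom (ZMod 2))).symm

/-- `dim_{𝔽₂}(J₂Λ₂/2Λ₂) = 5`, hence `dim_{𝔽₂}(Λ₂/J₂Λ₂) = 3`, and therefore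
`Λ₂ = ℤ₂⁸` is not a free module over the 2-adic Lipschitz order
`𝒪₂ = ℤ₂⟨i,j⟩` (acting via `i ↦ R(i)`, `j ↦ R(j)`).  Freeness is phrased
concretely: there is no finite family `v` of vectors such that every `w ∈ Λ₂`
is uniquely `w = Σ φ(qₗ) · vₗ` with `qₗ ∈ 𝒪₂`. -/
theorem lambda2_not_free_over_lipschitz_order :
    Module.finrank (ZMod 2) JLambda = 5 ∧
    Module.finrank (ZMod 2) ((Fin 8 → ZMod 2) ⧸ JLambda) = 3 ∧
    ∀ φ : ℍ[ℤ_[2],-1,-1] →+* Matrix (Fin 8) (Fin 8) ℤ_[2],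
      φ ⟨0, 1, 0, 0⟩ = Ri.map (Int.cast : ℤ → ℤ_[2]) →
      φ ⟨0, 0, 1, 0⟩ = Rj.map (Int.cast : ℤ → ℤ_[2]) →
      ¬ ∃ (n : ℕ) (v : Fin n → (Fin 8 → ℤ_[2])),
          ∀ w : Fin 8 → ℤ_[2], ∃! q : Fin n → ℍ[ℤ_[2],-1,-1],
            w = ∑ l : Fin n, (φ (q l)).mulVec (v l) := by
  refine ⟨finrank_JLambda, finrank_quotient_JLambda, ?_⟩
  rintro φ hi hj ⟨n, v, hv⟩
  have hcard : n * 4 ≤ 8 := by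
    simpa using (linearIndependent_reducedFamily (φ := φ) (v := v) hv).fintype_card_le_finrank
  have hgen : 3 ≤ n := finrank_quotient_JLambda ▸
    finrank_quotient_le_of_forall_sub_mem (fun w => (hv w).exists) JLambda
      (toZMod_mapMatrix_basisOneIJK_mulVec_sub_self_mem_JLambda φ hi hj)
  omega
end

section
/- Let c be an element of a field of characteristic 0 with c ∉ {0, 1, −1}, and fix a square root √c. If (z, v) satisfies v² = −z(z² − 1)(z² − c²) with z ≠ 0, then the pair u = z + c/z, w = i·v·(z + √c)/z² (where i² = −1) satisfies w² = (u + 2√c)(u² − (c+1)²). The same holds with √c replaced by −√c and u + 2√c replaced by u − 2√c. -/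
/-- Let `c` be an element of a field of characteristic `0` with `c ∉ {0,1,−1}`,
`s` a fixed square root of `c`, and `i` a square root of `−1`.  If `(z,v)`
satisfies `v² = −z(z²−1)(z²−c²)` with `z ≠ 0`, then `u = z + c/z` and
`w = i·v·(z+s)/z²` satisfy `w² = (u+2s)(u²−(c+1)²)`; with `s` replaced by `−s`
one gets `w² = (u−2s)(u²−(c+1)²)`. -/
theorem genus2_to_elliptic_map_identity
    (F : Type*) [Field F] [CharZero F]
    (c s i : F) (hc0 : c ≠ 0) (hc1 : c ≠ 1) (hcm1 : c ≠ -1)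
    (hs : s ^ 2 = c) (hi : i ^ 2 = -1)
    (z v : F) (hz : z ≠ 0) (hv : v ^ 2 = -z * (z ^ 2 - 1) * (z ^ 2 - c ^ 2)) :
    ((i * v * (z + s) / z ^ 2) ^ 2 =
      ((z + c / z) + 2 * s) * ((z + c / z) ^ 2 - (c + 1) ^ 2)) ∧
    ((i * v * (z - s) / z ^ 2) ^ 2 =
      ((z + c / z) - 2 * s) * ((z + c / z) ^ 2 - (c + 1) ^ 2)) := by
  constructor <;> field_simp <;> ring_nf <;> rw [hi, hv, ← hs] <;> ring
end

section
/- For c ∉ {0, ±1, −3, −1/3} in a field of characteristic 0 with a chosen square root √c, the elliptic curve w² = (u − 2√c)(u² − (c+1)²) has j-invariant equal to 1728·(c + 1/3)³(c + 3)³ / ((c − 1)⁴(c + 1)²). In particular the j-invariant is the same for both sign choices ±√c, and as a rational function of c it is non-constant. -/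
open scoped Polynomial
open Polynomial

/-- For `c ∉ {0, ±1, −3, −1/3}` in a field of characteristic `0` with a chosen
square root `s = √c`, the elliptic curve `w² = (u − 2√c)(u² − (c+1)²)` (in
Weierstrass form, with `Δ ≠ 0`) has `j`-invariant
`1728·(c + 1/3)³(c + 3)³ / ((c − 1)⁴(c + 1)²)`, i.e.
`c₄³·(c−1)⁴(c+1)² = 1728(c+1/3)³(c+3)³·Δ`; the `j`-invariant is the same for
both sign choices `±√c`, and as a rational function of `c` it is non-constant. -/
theorem j_invariant_of_Ec
    (F : Type*) [Field F] [CharZero F] (c s : F)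
    (hc0 : c ≠ 0) (hc1 : c ≠ 1) (hcm1 : c ≠ -1) (hcm3 : c ≠ -3)
    (hcm13 : c ≠ -(1 / 3)) (hs : s ^ 2 = c) :
    ∀ W W' : WeierstrassCurve F,
      W = ⟨0, -(2 * s), 0, -((c + 1) ^ 2), 2 * s * (c + 1) ^ 2⟩ →
      W' = ⟨0, 2 * s, 0, -((c + 1) ^ 2), -(2 * s * (c + 1) ^ 2)⟩ →
      (W.Δ ≠ 0 ∧
        W.c₄ ^ 3 * ((c - 1) ^ 4 * (c + 1) ^ 2) =
          1728 * (c + 1 / 3) ^ 3 * (c + 3) ^ 3 * W.Δ) ∧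
      (W'.Δ ≠ 0 ∧
        W'.c₄ ^ 3 * ((c - 1) ^ 4 * (c + 1) ^ 2) =
          1728 * (c + 1 / 3) ^ 3 * (c + 3) ^ 3 * W'.Δ) ∧
      ¬ ∃ k : ℚ, (1728 : ℚ[X]) * (X + C (1 / 3)) ^ 3 * (X + 3) ^ 3 =
          C k * ((X - 1) ^ 4 * (X + 1) ^ 2) := by
  intro W W' hW hW'
  have hne : (64 : F) * (c - 1) ^ 4 * (c + 1) ^ 2 ≠ 0 := by
    have h1 : c - 1 ≠ 0 := sub_ne_zero.mpr hc1
    have h2 : c + 1 ≠ 0 := by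
      intro h; exact hcm1 (by linear_combination h)
    exact mul_ne_zero (mul_ne_zero (by norm_num) (pow_ne_zero _ h1)) (pow_ne_zero _ h2)
  have hΔ : W.Δ = 64 * (c - 1) ^ 4 * (c + 1) ^ 2 := by
    subst hW
    simp only [WeierstrassCurve.Δ, WeierstrassCurve.b₂, WeierstrassCurve.b₄,
      WeierstrassCurve.b₆, WeierstrassCurve.b₈]
    linear_combination (1024 * (c + 1) ^ 2 * s ^ 2 + 1024 * c * (c + 1) ^ 2
      - 512 * (c + 1) ^ 4) * hs
  have hΔ' : W'.Δ = 64 * (c - 1) ^ 4 * (c + 1) ^ 2 := by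
    subst hW'
    simp only [WeierstrassCurve.Δ, WeierstrassCurve.b₂, WeierstrassCurve.b₄,
      WeierstrassCurve.b₆, WeierstrassCurve.b₈]
    linear_combination (1024 * (c + 1) ^ 2 * s ^ 2 + 1024 * c * (c + 1) ^ 2
      - 512 * (c + 1) ^ 4) * hs
  have hc4 : W.c₄ = 16 * (3 * c + 1) * (c + 3) := by
    subst hW
    simp only [WeierstrassCurve.c₄, WeierstrassCurve.b₂, WeierstrassCurve.b₄]
    linear_combination 64 * hs
  have hc4' : W'.c₄ = 16 * (3 * c + 1) * (c + 3) := by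
    subst hW'
    simp only [WeierstrassCurve.c₄, WeierstrassCurve.b₂, WeierstrassCurve.b₄]
    linear_combination 64 * hs
  refine ⟨⟨hΔ ▸ hne, by rw [hΔ, hc4]; ring⟩, ⟨hΔ' ▸ hne, by rw [hΔ', hc4']; ring⟩, ?_⟩
  rintro ⟨k, hk⟩
  have h1 := congrArg (Polynomial.eval 1) hk
  simp only [eval_mul, eval_pow, eval_add, eval_sub, eval_X, eval_C, eval_ofNat] at h1
  norm_num at h1
end
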